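/- arXiv:2210.09735 — 4 statements merged into one kernel-verified Lean document; each statement's English description precedes it below -/
import Mathlib

section
/- Let Θ̂ ∈ ℝ^{d×d} be Schur stable and Φ̂ ≻ 0, and set V̂ = Σ_{t=0}^∞ Θ̂ᵗ Φ̂ (Θ̂ᵀ)ᵗ. Then the operator T(X) = Σ_{t=0}^∞ Θ̂ᵗ X (Θ̂ᵀ)ᵗ (acting on symmetric matrices) has induced operator norm satisfying ‖T‖ ≤ ‖V̂‖ / σ_min(Φ̂). -/
/-!
The quadratic form of a symmetric `X` is dominated by that of `Φ`: from `σ • 1 ≤ Φ`,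
`|yᵀ X y| ≤ ‖X‖ ‖y‖² ≤ (‖X‖ / σ) yᵀ Φ y`. Each term `Θᵗ X (Θᵀ)ᵗ` is a congruence of `X`, whose
quadratic form at `x` is that of `X` at `(Θᵀ)ᵗ x`, so summing gives
`|xᵀ T(X) x| ≤ (‖X‖ / σ) xᵀ V x ≤ (‖X‖ / σ) ‖V‖ ‖x‖²`. Since `T(X)` is symmetric, its spectral
norm is the supremum of its Rayleigh quotient, which yields the bound. The series converge
because, by Gelfand's formula, a spectral radius below `1` gives `‖Θᵗ‖ ≤ rᵗ` eventually for
some `r < 1`.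
-/

open Matrix

/-- A real square matrix is Schur stable iff every (complex) spectral value has
modulus strictly less than 1. -/
def IsSchur {d : ℕ} (A : Matrix (Fin d) (Fin d) ℝ) : Prop :=
  ∀ z ∈ spectrum ℂ (A.map Complex.ofReal), ‖z‖ < 1

/-- The spectral (2-induced) norm of a real matrix. -/
noncomputable def specNorm {a b : ℕ} (A : Matrix (Fin a) (Fin b) ℝ) : ℝ :=
  ‖LinearMap.toContinuousLinearMap (Matrix.toEuclideanLin A)‖

open Filter NNReal in
theorem spectrum.eventually_norm_pow_le_of_spectralRadius_lt {A : Type*} [NormedRing A]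
    [NormedAlgebra ℂ A] [CompleteSpace A] (a : A) {r : ℝ≥0} (h : spectralRadius ℂ a < r) :
    ∀ᶠ n : ℕ in atTop, ‖a ^ n‖ ≤ r ^ n := by
  filter_upwards [(pow_nnnorm_pow_one_div_tendsto_nhds_spectralRadius a).eventually_lt_const h,
    eventually_gt_atTop 0] with n hn hn0
  rw [one_div, ← ENNReal.coe_rpow_of_nonneg _ (by positivity), ENNReal.coe_lt_coe,
    NNReal.rpow_inv_lt_iff (by positivity), NNReal.rpow_natCast] at hn
  exact_mod_cast hn.le

open Filter NNReal in
theorem summable_pow_mul_mul_pow {A : Type*} [NormedRing A] [CompleteSpace A] {a b : A}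
    {r : ℝ≥0} (hr : r < 1) (ha : ∀ᶠ n : ℕ in atTop, ‖a ^ n‖ ≤ r ^ n)
    (hb : ∀ᶠ n : ℕ in atTop, ‖b ^ n‖ ≤ r ^ n) (x : A) :
    Summable fun n : ℕ ↦ a ^ n * x * b ^ n := by
  have hr2 : (r : ℝ) * r < 1 := mul_lt_one_of_nonneg_of_lt_one_left r.2 hr hr.le
  refine .of_norm_bounded_eventually_nat
    ((summable_geometric_of_lt_one (by positivity) hr2).mul_left ‖x‖) ?_
  filter_upwards [ha, hb] with n han hbn
  calc ‖a ^ n * x * b ^ n‖ ≤ ‖a ^ n‖ * ‖x‖ * ‖b ^ n‖ := norm_mul₃_le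
    _ ≤ r ^ n * ‖x‖ * r ^ n := by gcongr
    _ = ‖x‖ * (r * r) ^ n := by ring

section Frobenius

-- All norms induce the same topology; the Frobenius norm is invariant under transposition and under
-- `map Complex.ofReal`, so it transfers Gelfand's bound from `Θ.map Complex.ofReal` to `Θᵀ`.

open Filter
open scoped Matrix.Norms.Frobenius

theorem IsSchur.spectralRadius_lt_one {d : ℕ} {Θ : Matrix (Fin d) (Fin d) ℝ} (hΘ : IsSchur Θ) :
    spectralRadius ℂ (Θ.map Complex.ofReal) < 1 := by
  rcases subsingleton_or_nontrivial (Matrix (Fin d) (Fin d) ℂ) with _ | _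
  · simp [spectrum.SpectralRadius.of_subsingleton]
  · simpa using spectrum.spectralRadius_lt_of_forall_lt (r := 1) _
      fun z hz ↦ by simpa [← NNReal.coe_lt_coe] using hΘ z hz

theorem IsSchur.summable_pow_mul_mul_transpose_pow {d : ℕ} {Θ : Matrix (Fin d) (Fin d) ℝ}
    (hΘ : IsSchur Θ) (X : Matrix (Fin d) (Fin d) ℝ) :
    Summable fun t : ℕ ↦ Θ ^ t * X * Θᵀ ^ t := by
  obtain ⟨r, hρr, hr1⟩ := ENNReal.lt_iff_exists_nnreal_btwn.mp hΘ.spectralRadius_lt_one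
  have hpow : ∀ᶠ n : ℕ in atTop, ‖Θ ^ n‖ ≤ r ^ n := by
    filter_upwards [spectrum.eventually_norm_pow_le_of_spectralRadius_lt _ hρr] with n hn
    have hmap : (Θ ^ n).map Complex.ofReal = Θ.map Complex.ofReal ^ n :=
      map_pow Complex.ofRealHom.mapMatrix Θ n
    rwa [← hmap, frobenius_norm_map_eq _ _ Complex.norm_real] at hn
  refine summable_pow_mul_mul_pow (by exact_mod_cast hr1) hpow ?_ X
  simpa only [← transpose_pow, frobenius_norm_transpose] using hpow

end Frobenius

open scoped RealInnerProductSpace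

theorem ContinuousLinearMap.norm_le_of_abs_inner_self_le {E : Type*} [NormedAddCommGroup E]
    [InnerProductSpace ℝ E] {T : E →L[ℝ] E} (hT : (T : E →ₗ[ℝ] E).IsSymmetric) {K : ℝ}
    (hK : 0 ≤ K) (h : ∀ x, |⟪T x, x⟫| ≤ K * ‖x‖ ^ 2) : ‖T‖ ≤ K := by
  rw [T.norm_eq_iSup_rayleighQuotient hT]
  refine ciSup_le fun x ↦ ?_
  rcases eq_or_ne x 0 with rfl | hx
  · simpa using hK
  · rw [rayleighQuotient, reApplyInnerSelf_apply, RCLike.re_to_real, abs_div, abs_sq,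
      div_le_iff₀ (by positivity)]
    exact h x

theorem Matrix.inner_toEuclideanLin_toLp {n : Type*} [Fintype n] [DecidableEq n]
    (A : Matrix n n ℝ) (x : n → ℝ) :
    ⟪toEuclideanLin A (WithLp.toLp 2 x), WithLp.toLp 2 x⟫ = x ⬝ᵥ A *ᵥ x := by
  simp [EuclideanSpace.inner_eq_star_dotProduct]

theorem EuclideanSpace.norm_toLp_sq {n : Type*} [Fintype n] (x : n → ℝ) :
    ‖(WithLp.toLp 2 x : EuclideanSpace ℝ n)‖ ^ 2 = x ⬝ᵥ x := by
  rw [← real_inner_self_eq_norm_sq, EuclideanSpace.inner_eq_star_dotProduct]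
  simp

theorem specNorm_nonneg {a b : ℕ} (A : Matrix (Fin a) (Fin b) ℝ) : 0 ≤ specNorm A :=
  norm_nonneg _

theorem abs_dotProduct_mulVec_le_specNorm {d : ℕ} (A : Matrix (Fin d) (Fin d) ℝ)
    (x : Fin d → ℝ) : |x ⬝ᵥ A *ᵥ x| ≤ specNorm A * (x ⬝ᵥ x) := by
  rw [← inner_toEuclideanLin_toLp, ← EuclideanSpace.norm_toLp_sq, sq, ← mul_assoc]
  exact (abs_real_inner_le_norm _ _).trans <| by
    gcongr
    exact (LinearMap.toContinuousLinearMap (toEuclideanLin A)).le_opNorm _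

theorem specNorm_le_of_abs_dotProduct_mulVec_le {d : ℕ} {S : Matrix (Fin d) (Fin d) ℝ}
    (hS : Sᵀ = S) {K : ℝ} (hK : 0 ≤ K) (h : ∀ x, |x ⬝ᵥ S *ᵥ x| ≤ K * (x ⬝ᵥ x)) :
    specNorm S ≤ K := by
  refine ContinuousLinearMap.norm_le_of_abs_inner_self_le ?_ hK fun x ↦ ?_
  · exact isSymmetric_toEuclideanLin_iff.mpr hS
  · simpa [← inner_toEuclideanLin_toLp, ← EuclideanSpace.norm_toLp_sq] using h x.ofLp

theorem HasSum.dotProduct_mulVec {ι n : Type*} [Fintype n] {f : ι → Matrix n n ℝ}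
    {A : Matrix n n ℝ} (hf : HasSum f A) (x : n → ℝ) :
    HasSum (fun i ↦ x ⬝ᵥ f i *ᵥ x) (x ⬝ᵥ A *ᵥ x) :=
  let φ : Matrix n n ℝ →ₗ[ℝ] ℝ :=
    { toFun B := x ⬝ᵥ B *ᵥ x
      map_add' B C := by simp [add_mulVec, dotProduct_add]
      map_smul' c B := by simp [smul_mulVec, dotProduct_smul] }
  hf.mapL (LinearMap.toContinuousLinearMap φ)

theorem Matrix.dotProduct_mul_mul_transpose_mulVec {n R : Type*} [Fintype n] [CommSemiring R]
    (A X : Matrix n n R) (x : n → R) :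
    x ⬝ᵥ (A * X * Aᵀ) *ᵥ x = (Aᵀ *ᵥ x) ⬝ᵥ X *ᵥ (Aᵀ *ᵥ x) := by
  rw [← mulVec_mulVec, ← mulVec_mulVec, dotProduct_mulVec, mulVec_transpose]

theorem Matrix.mul_dotProduct_self_le_of_posSemidef_sub {n : Type*} [Fintype n] [DecidableEq n]
    {A : Matrix n n ℝ} {σ : ℝ} (h : (A - σ • 1).PosSemidef) (x : n → ℝ) :
    σ * (x ⬝ᵥ x) ≤ x ⬝ᵥ A *ᵥ x := by
  have := h.dotProduct_mulVec_nonneg x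
  simp only [star_trivial, sub_mulVec, smul_mulVec, one_mulVec, dotProduct_sub,
    dotProduct_smul, smul_eq_mul] at this
  linarith

theorem abs_dotProduct_mulVec_le_of_posSemidef_sub {d : ℕ} {X Φ : Matrix (Fin d) (Fin d) ℝ}
    {σ : ℝ} (hσ : 0 < σ) (hΦ : (Φ - σ • 1).PosSemidef) (y : Fin d → ℝ) :
    |y ⬝ᵥ X *ᵥ y| ≤ specNorm X / σ * (y ⬝ᵥ Φ *ᵥ y) := calc
  |y ⬝ᵥ X *ᵥ y| ≤ specNorm X * (y ⬝ᵥ y) := abs_dotProduct_mulVec_le_specNorm X y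
  _ = specNorm X / σ * (σ * (y ⬝ᵥ y)) := by field_simp
  _ ≤ specNorm X / σ * (y ⬝ᵥ Φ *ᵥ y) := by
    have : 0 ≤ specNorm X / σ := div_nonneg (specNorm_nonneg X) hσ.le
    gcongr
    exact mul_dotProduct_self_le_of_posSemidef_sub hΦ y

noncomputable def lyapunovSum {n : Type*} [Fintype n] [DecidableEq n] (Θ X : Matrix n n ℝ) :
    Matrix n n ℝ :=
  ∑' t : ℕ, Θ ^ t * X * Θᵀ ^ t

section Lyapunov

variable {n : Type*} [Fintype n] [DecidableEq n] {Θ X : Matrix n n ℝ}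

theorem transpose_lyapunovSum (hX : Xᵀ = X) : (lyapunovSum Θ X)ᵀ = lyapunovSum Θ X := by
  simp only [lyapunovSum, transpose_tsum, transpose_mul, transpose_pow, transpose_transpose, hX,
    mul_assoc]

theorem hasSum_dotProduct_lyapunovSum_mulVec (hs : Summable fun t : ℕ ↦ Θ ^ t * X * Θᵀ ^ t)
    (x : n → ℝ) :
    HasSum (fun t : ℕ ↦ (Θᵀ ^ t *ᵥ x) ⬝ᵥ X *ᵥ (Θᵀ ^ t *ᵥ x)) (x ⬝ᵥ lyapunovSum Θ X *ᵥ x) := by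
  simpa only [lyapunovSum, ← transpose_pow, dotProduct_mul_mul_transpose_mulVec] using
    hs.hasSum.dotProduct_mulVec x

theorem abs_dotProduct_lyapunovSum_mulVec_le {P : Matrix n n ℝ} {c : ℝ}
    (hX : Summable fun t : ℕ ↦ Θ ^ t * X * Θᵀ ^ t) (hP : Summable fun t : ℕ ↦ Θ ^ t * P * Θᵀ ^ t)
    (h : ∀ y, |y ⬝ᵥ X *ᵥ y| ≤ c * (y ⬝ᵥ P *ᵥ y)) (x : n → ℝ) :
    |x ⬝ᵥ lyapunovSum Θ X *ᵥ x| ≤ c * (x ⬝ᵥ lyapunovSum Θ P *ᵥ x) := by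
  have hXx := hasSum_dotProduct_lyapunovSum_mulVec hX x
  have hPx := (hasSum_dotProduct_lyapunovSum_mulVec hP x).mul_left c
  exact abs_le.mpr ⟨hasSum_le (fun t ↦ (abs_le.mp (h _)).1) hPx.neg hXx,
    hasSum_le (fun t ↦ (abs_le.mp (h _)).2) hXx hPx⟩

end Lyapunov

theorem specNorm_lyapunovSum_le {d : ℕ} {Θ X P : Matrix (Fin d) (Fin d) ℝ} {c : ℝ} (hc : 0 ≤ c)
    (hXT : Xᵀ = X) (hX : Summable fun t : ℕ ↦ Θ ^ t * X * Θᵀ ^ t)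
    (hP : Summable fun t : ℕ ↦ Θ ^ t * P * Θᵀ ^ t)
    (h : ∀ y, |y ⬝ᵥ X *ᵥ y| ≤ c * (y ⬝ᵥ P *ᵥ y)) :
    specNorm (lyapunovSum Θ X) ≤ c * specNorm (lyapunovSum Θ P) := by
  refine specNorm_le_of_abs_dotProduct_mulVec_le (transpose_lyapunovSum hXT)
    (mul_nonneg hc (specNorm_nonneg _)) fun x ↦ ?_
  calc |x ⬝ᵥ lyapunovSum Θ X *ᵥ x| ≤ c * (x ⬝ᵥ lyapunovSum Θ P *ᵥ x) :=
        abs_dotProduct_lyapunovSum_mulVec_le hX hP h x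
    _ ≤ c * (specNorm (lyapunovSum Θ P) * (x ⬝ᵥ x)) := by
        gcongr
        exact (le_abs_self _).trans (abs_dotProduct_mulVec_le_specNorm _ x)
    _ = c * specNorm (lyapunovSum Θ P) * (x ⬝ᵥ x) := (mul_assoc ..).symm

theorem lyapunov_operator_norm_bound_general {d : ℕ}
    (Θ Φ V : Matrix (Fin d) (Fin d) ℝ) (σ : ℝ)
    (hΘ : IsSchur Θ)
    (hσ : 0 < σ)
    (hσΦ : (Φ - σ • (1 : Matrix (Fin d) (Fin d) ℝ)).PosSemidef)
    (hV : V = ∑' t : ℕ, Θ ^ t * Φ * (Θᵀ) ^ t) :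
    ∀ X : Matrix (Fin d) (Fin d) ℝ, Xᵀ = X →
      Summable (fun t : ℕ => Θ ^ t * X * (Θᵀ) ^ t) ∧
      specNorm (∑' t : ℕ, Θ ^ t * X * (Θᵀ) ^ t) ≤ specNorm V / σ * specNorm X := by
  intro X hX
  obtain rfl : V = lyapunovSum Θ Φ := hV
  have hsum := hΘ.summable_pow_mul_mul_transpose_pow
  refine ⟨hsum X, ?_⟩
  calc specNorm (lyapunovSum Θ X) ≤ specNorm X / σ * specNorm (lyapunovSum Θ Φ) :=
        specNorm_lyapunovSum_le (div_nonneg (specNorm_nonneg X) hσ.le) hX (hsum X) (hsum Φ)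
          (abs_dotProduct_mulVec_le_of_posSemidef_sub hσ hσΦ)
    _ = specNorm (lyapunovSum Θ Φ) / σ * specNorm X := by ring

/-- Let Θ̂ be Schur stable, Φ̂ ⪰ σI ≻ 0, and
V̂ = Σ_t Θ̂ᵗ Φ̂ (Θ̂ᵀ)ᵗ.  Then the Lyapunov operator T(X) = Σ_t Θ̂ᵗ X (Θ̂ᵀ)ᵗ on
symmetric matrices satisfies ‖T(X)‖ ≤ (‖V̂‖/σ)‖X‖ (in particular for
σ = σ_min(Φ̂)), and the defining series converges. -/
theorem lyapunov_operator_norm_bound {d : ℕ}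
    (Θ Φ V : Matrix (Fin d) (Fin d) ℝ) (σ : ℝ)
    (hΘ : IsSchur Θ) (hΦ : Φ.PosDef)
    (hσ : 0 < σ)
    (hσΦ : (Φ - σ • (1 : Matrix (Fin d) (Fin d) ℝ)).PosSemidef)
    (hV : V = ∑' t : ℕ, Θ ^ t * Φ * (Θᵀ) ^ t) :
    ∀ X : Matrix (Fin d) (Fin d) ℝ, Xᵀ = X →
      Summable (fun t : ℕ => Θ ^ t * X * (Θᵀ) ^ t) ∧
      specNorm (∑' t : ℕ, Θ ^ t * X * (Θᵀ) ^ t) ≤ specNorm V / σ * specNorm X :=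
  lyapunov_operator_norm_bound_general Θ Φ V σ hΘ hσ hσΦ hV
end

section
/- Let Θ̂ ∈ ℝ^{d×d} be Schur stable with spectral radius ρ(Θ̂), Φ̂ ≻ 0, and V̂ = Σ_{t=0}^∞ Θ̂ᵗ Φ̂ (Θ̂ᵀ)ᵗ. Then tr(V̂) ≥ σ_min(Φ̂) / (2(1 − ρ(Θ̂))). -/
open Matrix

/-- The spectral radius of a real square matrix: the largest modulus of a
(complex) spectral value. -/
noncomputable def sprad {d : ℕ} (A : Matrix (Fin d) (Fin d) ℝ) : ℝ :=
  sSup ((fun z : ℂ => ‖z‖) '' spectrum ℂ (A.map Complex.ofReal))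

/-!
Let `z` be an eigenvalue of `Θ` (over `ℂ`) with `‖z‖ = ρ(Θ)` and eigenvector `v`. Then
`Θᵗ v = zᵗ v`, so by Cauchy–Schwarz `tr(Θᵗ (Θᵗ)ᵀ) = ‖Θᵗ‖_F² ≥ ρ^{2t}`. Since `Φ ⪰ σ I`, the
`t`-th term of the series has trace at least `σ ρ^{2t}`, and summing the geometric series gives
`tr V ≥ σ / (1 - ρ²) ≥ σ / (2(1 - ρ))`.
-/

theorem HasSum.matrix_trace {X n R : Type*} [Fintype n] [AddCommMonoid R] [TopologicalSpace R]
    [ContinuousAdd R] {f : X → Matrix n n R} {a : Matrix n n R} (hf : HasSum f a) :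
    HasSum (fun x => (f x).trace) a.trace :=
  hf.map (traceAddMonoidHom n R) continuous_id.matrix_trace

namespace Matrix

variable {m n R : Type*} [Fintype m] [Fintype n]

theorem trace_mul_transpose_self [CommSemiring R] (M : Matrix m n R) :
    (M * Mᵀ).trace = ∑ i, ∑ j, M i j ^ 2 := by
  simp only [trace, diag, mul_apply, transpose_apply, sq]

theorem sum_norm_sq_mulVec_le [SeminormedRing R] (B : Matrix m n R) (v : n → R) :
    ∑ i, ‖(B *ᵥ v) i‖ ^ 2 ≤ (∑ i, ∑ j, ‖B i j‖ ^ 2) * ∑ j, ‖v j‖ ^ 2 := by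
  rw [Finset.sum_mul]
  refine Finset.sum_le_sum fun i _ => ?_
  calc ‖(B *ᵥ v) i‖ ^ 2 ≤ (∑ j, ‖B i j‖ * ‖v j‖) ^ 2 := by
        gcongr
        exact (norm_sum_le _ _).trans (Finset.sum_le_sum fun j _ => norm_mul_le _ _)
    _ ≤ (∑ j, ‖B i j‖ ^ 2) * ∑ j, ‖v j‖ ^ 2 := Finset.sum_mul_sq_le_sq_mul_sq _ _ _

theorem norm_sq_pow_le_sum_norm_sq_of_hasEigenvector [NormedField R] [DecidableEq n]
    {A : Matrix n n R} {z : R} {v : n → R} (hv : Module.End.HasEigenvector (toLin' A) z v)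
    (t : ℕ) :
    (‖z‖ ^ 2) ^ t ≤ ∑ i, ∑ j, ‖(A ^ t) i j‖ ^ 2 := by
  have hpow : (A ^ t) *ᵥ v = z ^ t • v := by
    simpa only [← toLin'_pow, toLin'_apply] using hv.pow_apply t
  have hv_pos : 0 < ∑ j, ‖v j‖ ^ 2 := by
    obtain ⟨j, hj⟩ := Function.ne_iff.mp hv.2
    exact Finset.sum_pos' (fun _ _ => by positivity) ⟨j, Finset.mem_univ j, by positivity⟩
  refine le_of_mul_le_mul_right ?_ hv_pos
  calc (‖z‖ ^ 2) ^ t * ∑ j, ‖v j‖ ^ 2 = ∑ i, ‖((A ^ t) *ᵥ v) i‖ ^ 2 := by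
        simp only [hpow, Finset.mul_sum, Pi.smul_apply, smul_eq_mul, norm_mul, norm_pow]
        ring_nf
    _ ≤ _ := sum_norm_sq_mulVec_le _ _

theorem norm_sq_pow_le_trace_pow_mul_transpose_pow [DecidableEq n] (Θ : Matrix n n ℝ) {z : ℂ}
    (hz : z ∈ spectrum ℂ (Θ.map Complex.ofReal)) (t : ℕ) :
    (‖z‖ ^ 2) ^ t ≤ (Θ ^ t * (Θ ^ t)ᵀ).trace := by
  rw [← spectrum_toLin', ← Module.End.hasEigenvalue_iff_mem_spectrum] at hz
  obtain ⟨v, hv⟩ := hz.exists_hasEigenvector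
  refine (norm_sq_pow_le_sum_norm_sq_of_hasEigenvector hv t).trans_eq ?_
  have hmap : Θ.map Complex.ofReal ^ t = (Θ ^ t).map Complex.ofReal :=
    (Θ.map_pow Complex.ofRealHom t).symm
  simp only [trace_mul_transpose_self, hmap, map_apply, Complex.norm_real, Real.norm_eq_abs,
    sq_abs]

theorem mul_trace_mul_transpose_le_trace_mul_mul_transpose [DecidableEq n] (M : Matrix m n ℝ)
    {Φ : Matrix n n ℝ} {σ : ℝ} (hΦ : (Φ - σ • 1).PosSemidef) :
    σ * (M * Mᵀ).trace ≤ (M * Φ * Mᵀ).trace := by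
  have h := (hΦ.mul_mul_conjTranspose_same M).trace_nonneg
  rw [conjTranspose_eq_transpose_of_trivial, Matrix.mul_sub, Matrix.sub_mul, trace_sub,
    Matrix.mul_smul, Matrix.smul_mul, Matrix.mul_one, trace_smul, smul_eq_mul] at h
  linarith

end Matrix

theorem exists_mem_spectrum_norm_eq_sprad {d : ℕ} (hd : 0 < d) (Θ : Matrix (Fin d) (Fin d) ℝ) :
    ∃ z ∈ spectrum ℂ (Θ.map Complex.ofReal), ‖z‖ = sprad Θ :=
  have : Nonempty (Fin d) := ⟨⟨0, hd⟩⟩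
  ((spectrum.nonempty_of_isAlgClosed_of_finiteDimensional ℂ _).image _).csSup_mem
    ((finite_spectrum _).image _)

theorem trace_gramian_lower_bound_general {d : ℕ} (hd : 0 < d)
    (Θ Φ V : Matrix (Fin d) (Fin d) ℝ) (σ : ℝ)
    (hΘ : sprad Θ < 1)
    (hσ : 0 < σ)
    (hσΦ : (Φ - σ • (1 : Matrix (Fin d) (Fin d) ℝ)).PosSemidef)
    (hsum : Summable fun t : ℕ => Θ ^ t * Φ * (Θᵀ) ^ t)
    (hV : V = ∑' t : ℕ, Θ ^ t * Φ * (Θᵀ) ^ t) :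
    σ / (2 * (1 - sprad Θ)) ≤ V.trace := by
  obtain ⟨z, hz, hρ⟩ := exists_mem_spectrum_norm_eq_sprad hd Θ
  set ρ := sprad Θ
  have hρ0 : 0 ≤ ρ := hρ ▸ norm_nonneg z
  have hρ2 : ρ ^ 2 < 1 := by nlinarith
  have hterm (t : ℕ) : σ * (ρ ^ 2) ^ t ≤ (Θ ^ t * Φ * (Θᵀ) ^ t).trace := by
    rw [← transpose_pow, ← hρ]
    exact (mul_le_mul_of_nonneg_left (norm_sq_pow_le_trace_pow_mul_transpose_pow Θ hz t)
      hσ.le).trans (mul_trace_mul_transpose_le_trace_mul_mul_transpose _ hσΦ)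
  have hgeom := (hasSum_geometric_of_lt_one (by positivity) hρ2).mul_left σ
  have hV' : HasSum (fun t : ℕ => (Θ ^ t * Φ * (Θᵀ) ^ t).trace) V.trace :=
    hV ▸ hsum.hasSum.matrix_trace
  calc σ / (2 * (1 - ρ)) ≤ σ / (1 - ρ ^ 2) :=
        div_le_div_of_nonneg_left hσ.le (by linarith) (by nlinarith)
    _ ≤ V.trace := hasSum_le hterm hgeom hV'

/-- Let Θ̂ ∈ ℝ^{d×d} (d ≥ 1) be Schur stable with spectral radius
ρ(Θ̂) < 1, Φ̂ ⪰ σI ≻ 0, and V̂ = Σ_t Θ̂ᵗ Φ̂ (Θ̂ᵀ)ᵗ.  Then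
tr(V̂) ≥ σ / (2(1 − ρ(Θ̂))) (in particular for σ = σ_min(Φ̂)). -/
theorem trace_gramian_lower_bound {d : ℕ} (hd : 0 < d)
    (Θ Φ V : Matrix (Fin d) (Fin d) ℝ) (σ : ℝ)
    (hΘ : sprad Θ < 1) (hΦ : Φ.PosDef)
    (hσ : 0 < σ)
    (hσΦ : (Φ - σ • (1 : Matrix (Fin d) (Fin d) ℝ)).PosSemidef)
    (hsum : Summable fun t : ℕ => Θ ^ t * Φ * (Θᵀ) ^ t)
    (hV : V = ∑' t : ℕ, Θ ^ t * Φ * (Θᵀ) ^ t) :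
    σ / (2 * (1 - sprad Θ)) ≤ V.trace :=
  trace_gramian_lower_bound_general hd Θ Φ V σ hΘ hσ hσΦ hsum hV
end

section
/- Let Θ, Π be matrices, K and K* feedback gains such that Θ + ΠK and Θ + ΠK* generate convergent closed-loop trajectories from v(L), with Ψ_K ⪰ 0 satisfying the value identity C_K(v) = vᵀΨ_K v for closed-loop cost. Define E_K = (R + ΠᵀΨ_KΠ)K + ΠᵀΨ_KΘ and V_{K*} = E[Σ_{t≥L} v*(t) v*(t)ᵀ] where v*(t) = (Θ+ΠK*)^{t−L} v(L). Then the cost gap satisfies J(K) − J(K*) ≤ tr( V_{K*} E_Kᵀ (R + ΠᵀΨ_KΠ)^{−1} E_K ). -/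
/-!
Write `G = R + ΠᵀΨ_KΠ`, `Θ* = Θ + ΠK*` and `Δ = Ψ_K − Ψ_{K*}`. Subtracting the two Stein
equations, `Δ − Θ*ᵀΔΘ*` is minus the advantage `DᵀGD + DᵀE_K + E_KᵀD` of `D = K* − K`, and
completing the square bounds it by `E_Kᵀ G⁻¹ E_K` in the Loewner order. Evaluated along the
`K*`-trajectory, which tends to `0`, this telescopes to
`v(L)ᵀ Δ v(L) ≤ ∑ₜ v*(t)ᵀ E_Kᵀ G⁻¹ E_K v*(t) = tr(V E_Kᵀ G⁻¹ E_K)` pointwise; then integrate.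
-/

open Matrix MeasureTheory Filter
open scoped MatrixOrder

theorem le_tsum_of_sub_succ_le {f g : ℕ → ℝ} (hf : Tendsto f atTop (nhds 0)) (hg : Summable g)
    (hfg : ∀ t, f t - f (t + 1) ≤ g t) : f 0 ≤ ∑' t, g t := by
  have hpartial : Tendsto (fun T => f 0 - f T) atTop (nhds (f 0)) := by
    simpa using tendsto_const_nhds.sub hf
  refine le_of_tendsto_of_tendsto' hpartial hg.hasSum.tendsto_sum_nat fun T => ?_
  rw [← Finset.sum_range_sub']
  exact Finset.sum_le_sum fun t _ => hfg t

namespace Matrix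

variable {n m : Type*} [Fintype n] [Fintype m]

theorem stein_advantage_eq {α : Type*} [CommRing α]
    (Θ Q Ψ : Matrix n n α) (P : Matrix n m α) (R : Matrix m m α) (K K' : Matrix m n α)
    (hR : Rᵀ = R) (hΨ : Ψᵀ = Ψ)
    (hStein : (Θ + P * K)ᵀ * Ψ * (Θ + P * K) - Ψ = -(Q + Kᵀ * R * K)) :
    Q + K'ᵀ * R * K' + (Θ + P * K')ᵀ * Ψ * (Θ + P * K') - Ψ
      = (K' - K)ᵀ * (R + Pᵀ * Ψ * P) * (K' - K)
        + (K' - K)ᵀ * ((R + Pᵀ * Ψ * P) * K + Pᵀ * Ψ * Θ)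
        + ((R + Pᵀ * Ψ * P) * K + Pᵀ * Ψ * Θ)ᵀ * (K' - K) := by
  have hQ : Q = Ψ - (Θ + P * K)ᵀ * Ψ * (Θ + P * K) - Kᵀ * R * K := by
    linear_combination (norm := abel) hStein
  subst hQ
  simp only [transpose_add, transpose_mul, transpose_sub, transpose_transpose, hR, hΨ,
    Matrix.add_mul, Matrix.mul_add, Matrix.sub_mul, Matrix.mul_sub, Matrix.mul_assoc]
  abel

theorem posSemidef_add_completeSquare [DecidableEq m] {G : Matrix m m ℝ} (hG : G.PosDef)
    (D E : Matrix m n ℝ) : (Dᵀ * G * D + Dᵀ * E + Eᵀ * D + Eᵀ * G⁻¹ * E).PosSemidef := by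
  have hGT : Gᵀ = G := by simpa using hG.isHermitian.eq
  have hdet : IsUnit G.det := isUnit_iff_ne_zero.mpr hG.det_pos.ne'
  have hsq : (G * D + E)ᵀ * G⁻¹ * (G * D + E)
      = Dᵀ * G * D + Dᵀ * E + Eᵀ * D + Eᵀ * G⁻¹ * E := by
    simp only [transpose_add, transpose_mul, hGT, Matrix.add_mul, Matrix.mul_add,
      Matrix.mul_assoc, mul_nonsing_inv_cancel_left _ _ hdet, nonsing_inv_mul_cancel_left _ _ hdet]
    abel
  rw [← hsq, ← conjTranspose_eq_transpose_of_trivial]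
  exact hG.inv.posSemidef.conjTranspose_mul_mul_same (G * D + E)

theorem stein_value_gap_le [DecidableEq m]
    (Θ Q ΨK Ψs : Matrix n n ℝ) (P : Matrix n m ℝ) (R : Matrix m m ℝ) (K Ks : Matrix m n ℝ)
    (hR : R.PosDef) (hΨK : ΨK.PosSemidef)
    (hSteinK : (Θ + P * K)ᵀ * ΨK * (Θ + P * K) - ΨK = -(Q + Kᵀ * R * K))
    (hSteins : (Θ + P * Ks)ᵀ * Ψs * (Θ + P * Ks) - Ψs = -(Q + Ksᵀ * R * Ks)) :
    ΨK - Ψs - (Θ + P * Ks)ᵀ * (ΨK - Ψs) * (Θ + P * Ks)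
      ≤ ((R + Pᵀ * ΨK * P) * K + Pᵀ * ΨK * Θ)ᵀ * (R + Pᵀ * ΨK * P)⁻¹
          * ((R + Pᵀ * ΨK * P) * K + Pᵀ * ΨK * Θ) := by
  have hG : (R + Pᵀ * ΨK * P).PosDef :=
    hR.add_posSemidef (by simpa using hΨK.conjTranspose_mul_mul_same P)
  have hadv := stein_advantage_eq Θ Q ΨK P R K Ks (by simpa using hR.isHermitian.eq)
    (by simpa using hΨK.isHermitian.eq) hSteinK
  have hQ : Q + Ksᵀ * R * Ks = Ψs - (Θ + P * Ks)ᵀ * Ψs * (Θ + P * Ks) := by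
    rw [← neg_sub, hSteins, neg_neg]
  set Θs := Θ + P * Ks
  set E := (R + Pᵀ * ΨK * P) * K + Pᵀ * ΨK * Θ
  have hgap : Eᵀ * (R + Pᵀ * ΨK * P)⁻¹ * E - (ΨK - Ψs - Θsᵀ * (ΨK - Ψs) * Θs)
      = (Ks - K)ᵀ * (R + Pᵀ * ΨK * P) * (Ks - K) + (Ks - K)ᵀ * E + Eᵀ * (Ks - K)
        + Eᵀ * (R + Pᵀ * ΨK * P)⁻¹ * E := by
    rw [← hadv, hQ]
    simp only [Matrix.mul_sub, Matrix.sub_mul]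
    abel
  rw [le_iff, hgap]
  exact posSemidef_add_completeSquare hG (Ks - K) E

theorem dotProduct_transpose_mul_mul_mulVec {R : Type*} [CommSemiring R] (A P : Matrix n n R)
    (y : n → R) : y ⬝ᵥ (Aᵀ * P * A) *ᵥ y = (A *ᵥ y) ⬝ᵥ P *ᵥ (A *ᵥ y) := by
  rw [← mulVec_mulVec, ← mulVec_mulVec, dotProduct_mulVec y, vecMul_transpose]

theorem dotProduct_mulVec_self_eq_trace {R : Type*} [CommSemiring R] (M : Matrix n n R)
    (x : n → R) : x ⬝ᵥ M *ᵥ x = trace (M * vecMulVec x x) := by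
  rw [mul_vecMulVec, trace_vecMulVec, dotProduct_comm]

theorem _root_.HasSum.dotProduct_mulVec_self {ι R : Type*} [CommSemiring R] [TopologicalSpace R]
    [IsTopologicalSemiring R] {x : ι → n → R} {V : Matrix n n R}
    (hV : HasSum (fun t => vecMulVec (x t) (x t)) V) (M : Matrix n n R) :
    HasSum (fun t => x t ⬝ᵥ M *ᵥ x t) (trace (M * V)) := by
  simp_rw [dotProduct_mulVec_self_eq_trace]
  exact (hV.mul_left M).map (traceAddMonoidHom n R) (continuous_id.matrix_trace)

variable {Ω : Type*} [MeasurableSpace Ω] {μ : Measure Ω}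

theorem integrable_trace_mul (M : Matrix n n ℝ) {V : Ω → Matrix n n ℝ}
    (hV : ∀ i j, Integrable (fun ω => V ω i j) μ) : Integrable (fun ω => trace (M * V ω)) μ := by
  simp only [trace, diag, mul_apply]
  exact integrable_finsetSum _ fun i _ => integrable_finsetSum _ fun j _ => (hV j i).const_mul _

theorem integral_trace_mul (M : Matrix n n ℝ) {V : Ω → Matrix n n ℝ}
    (hV : ∀ i j, Integrable (fun ω => V ω i j) μ) :
    ∫ ω, trace (M * V ω) ∂μ = trace (M * of fun i j => ∫ ω, V ω i j ∂μ) := by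
  have hentry : ∀ i j, Integrable (fun ω => M i j * V ω j i) μ := fun i j => (hV j i).const_mul _
  simp only [trace, diag, mul_apply, of_apply]
  rw [integral_finsetSum _ fun i _ => integrable_finsetSum _ fun j _ => hentry i j]
  refine Finset.sum_congr rfl fun i _ => ?_
  rw [integral_finsetSum _ fun j _ => hentry i j]
  simp only [integral_const_mul]

theorem dotProduct_mulVec_le_trace_of_stein_le [DecidableEq n] {A P M : Matrix n n ℝ}
    (hle : P - Aᵀ * P * A ≤ M) {x₀ : n → ℝ}
    (hconv : Tendsto (fun t : ℕ => (A ^ t) *ᵥ x₀) atTop (nhds 0)) {V : Matrix n n ℝ}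
    (hV : HasSum (fun t : ℕ => vecMulVec ((A ^ t) *ᵥ x₀) ((A ^ t) *ᵥ x₀)) V) :
    x₀ ⬝ᵥ P *ᵥ x₀ ≤ trace (M * V) := by
  set x : ℕ → n → ℝ := fun t => (A ^ t) *ᵥ x₀
  have hshift : ∀ t, x (t + 1) ⬝ᵥ P *ᵥ x (t + 1) = x t ⬝ᵥ (Aᵀ * P * A) *ᵥ x t := fun t => by
    rw [dotProduct_transpose_mul_mul_mulVec]
    simp only [x, pow_succ', mulVec_mulVec]
  have hstep : ∀ t, x t ⬝ᵥ P *ᵥ x t - x (t + 1) ⬝ᵥ P *ᵥ x (t + 1) ≤ x t ⬝ᵥ M *ᵥ x t := by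
    intro t
    have hpos := (le_iff.mp hle).dotProduct_mulVec_nonneg (x t)
    simp only [star_trivial, sub_mulVec, dotProduct_sub] at hpos
    linarith [hshift t]
  have hlim : Tendsto (fun t => x t ⬝ᵥ P *ᵥ x t) atTop (nhds 0) := by
    have hcont : Continuous fun v : n → ℝ => v ⬝ᵥ P *ᵥ v := by fun_prop
    simpa [Function.comp_def] using (hcont.tendsto 0).comp hconv
  have hsum := hV.dotProduct_mulVec_self M
  have hbound := le_tsum_of_sub_succ_le hlim hsum.summable hstep
  rwa [hsum.tsum_eq, show x 0 = x₀ by simp [x]] at hbound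

end Matrix

theorem cost_difference_bound_general {N m : ℕ}
    (Θ : Matrix (Fin N) (Fin N) ℝ) (Pm : Matrix (Fin N) (Fin m) ℝ)
    (Qc : Matrix (Fin N) (Fin N) ℝ) (R : Matrix (Fin m) (Fin m) ℝ)
    (K Ks : Matrix (Fin m) (Fin N) ℝ)
    (ΨK Ψs : Matrix (Fin N) (Fin N) ℝ)
    (hR : R.PosDef)
    (hΨK : ΨK.PosSemidef)
    (hSteinK : (Θ + Pm * K)ᵀ * ΨK * (Θ + Pm * K) - ΨK = -(Qc + Kᵀ * R * K))
    (hSteins : (Θ + Pm * Ks)ᵀ * Ψs * (Θ + Pm * Ks) - Ψs = -(Qc + Ksᵀ * R * Ks))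
    {Ω : Type*} [MeasurableSpace Ω] (μ : Measure Ω)
    (v0 : Ω → Fin N → ℝ)
    (hconvs : ∀ ω, Tendsto (fun t : ℕ => ((Θ + Pm * Ks) ^ t).mulVec (v0 ω)) atTop (nhds 0))
    (hSum : ∀ ω, ∀ i j : Fin N, Summable fun t : ℕ =>
      ((Θ + Pm * Ks) ^ t).mulVec (v0 ω) i * ((Θ + Pm * Ks) ^ t).mulVec (v0 ω) j)
    (hIntV : ∀ i j : Fin N, Integrable (fun ω => ∑' t : ℕ,
      ((Θ + Pm * Ks) ^ t).mulVec (v0 ω) i * ((Θ + Pm * Ks) ^ t).mulVec (v0 ω) j) μ)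
    (hIntK : Integrable (fun ω => v0 ω ⬝ᵥ ΨK.mulVec (v0 ω)) μ)
    (hInts : Integrable (fun ω => v0 ω ⬝ᵥ Ψs.mulVec (v0 ω)) μ)
    (Vs : Matrix (Fin N) (Fin N) ℝ)
    (hVs : ∀ i j, Vs i j = ∫ ω, ∑' t : ℕ,
      ((Θ + Pm * Ks) ^ t).mulVec (v0 ω) i * ((Θ + Pm * Ks) ^ t).mulVec (v0 ω) j ∂μ)
    (EK : Matrix (Fin m) (Fin N) ℝ)
    (hEK : EK = (R + Pmᵀ * ΨK * Pm) * K + Pmᵀ * ΨK * Θ) :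
    (∫ ω, v0 ω ⬝ᵥ ΨK.mulVec (v0 ω) ∂μ) - (∫ ω, v0 ω ⬝ᵥ Ψs.mulVec (v0 ω) ∂μ)
      ≤ (Vs * EKᵀ * (R + Pmᵀ * ΨK * Pm)⁻¹ * EK).trace := by
  set V : Ω → Matrix (Fin N) (Fin N) ℝ := fun ω => of fun i j => ∑' t : ℕ,
    ((Θ + Pm * Ks) ^ t *ᵥ v0 ω) i * ((Θ + Pm * Ks) ^ t *ᵥ v0 ω) j
  set M := EKᵀ * (R + Pmᵀ * ΨK * Pm)⁻¹ * EK
  have hV : ∀ ω, HasSum (fun t : ℕ =>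
      vecMulVec ((Θ + Pm * Ks) ^ t *ᵥ v0 ω) ((Θ + Pm * Ks) ^ t *ᵥ v0 ω)) (V ω) :=
    fun ω => Pi.hasSum.mpr fun i => Pi.hasSum.mpr fun j => (hSum ω i j).hasSum
  have hgap : ΨK - Ψs - (Θ + Pm * Ks)ᵀ * (ΨK - Ψs) * (Θ + Pm * Ks) ≤ M := by
    simpa only [M, hEK] using stein_value_gap_le Θ Qc ΨK Ψs Pm R K Ks hR hΨK hSteinK hSteins
  have hpointwise : ∀ ω, v0 ω ⬝ᵥ ΨK *ᵥ v0 ω - v0 ω ⬝ᵥ Ψs *ᵥ v0 ω ≤ trace (M * V ω) := fun ω => by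
    rw [← dotProduct_sub, ← sub_mulVec]
    exact dotProduct_mulVec_le_trace_of_stein_le hgap (hconvs ω) (hV ω)
  calc (∫ ω, v0 ω ⬝ᵥ ΨK *ᵥ v0 ω ∂μ) - (∫ ω, v0 ω ⬝ᵥ Ψs *ᵥ v0 ω ∂μ)
      = ∫ ω, (v0 ω ⬝ᵥ ΨK *ᵥ v0 ω - v0 ω ⬝ᵥ Ψs *ᵥ v0 ω) ∂μ := (integral_sub hIntK hInts).symm
    _ ≤ ∫ ω, trace (M * V ω) ∂μ :=
      integral_mono (hIntK.sub hInts) (integrable_trace_mul (V := V) M hIntV) hpointwise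
    _ = trace (M * Vs) := by rw [integral_trace_mul (V := V) M hIntV, Matrix.ext hVs]; rfl
    _ = trace (Vs * EKᵀ * (R + Pmᵀ * ΨK * Pm)⁻¹ * EK) := by
      rw [trace_mul_comm]; simp only [M, Matrix.mul_assoc]

/-- Cost-difference bound.  With Θ_K = Θ + ΠK and Θ_{K*} = Θ + ΠK*
generating convergent closed-loop trajectories from v(L), Ψ_K, Ψ_{K*} ⪰ 0 the
value matrices (solutions of the closed-loop Stein equations, so that the
closed-loop cost is C_K(v) = vᵀΨ_K v), E_K = (R + ΠᵀΨ_KΠ)K + ΠᵀΨ_KΘ and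
V_{K*} = E[Σ_{t≥L} v*(t)v*(t)ᵀ] for v*(t) = (Θ+ΠK*)^{t−L} v(L), the cost gap
satisfies J(K) − J(K*) ≤ tr(V_{K*} E_Kᵀ (R + ΠᵀΨ_KΠ)⁻¹ E_K). -/
theorem cost_difference_bound {N m : ℕ}
    (Θ : Matrix (Fin N) (Fin N) ℝ) (Pm : Matrix (Fin N) (Fin m) ℝ)
    (Qc : Matrix (Fin N) (Fin N) ℝ) (R : Matrix (Fin m) (Fin m) ℝ)
    (K Ks : Matrix (Fin m) (Fin N) ℝ)
    (ΨK Ψs : Matrix (Fin N) (Fin N) ℝ)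
    (hQc : Qc.PosSemidef) (hR : R.PosDef)
    (hΨK : ΨK.PosSemidef) (hΨs : Ψs.PosSemidef)
    (hSteinK : (Θ + Pm * K)ᵀ * ΨK * (Θ + Pm * K) - ΨK = -(Qc + Kᵀ * R * K))
    (hSteins : (Θ + Pm * Ks)ᵀ * Ψs * (Θ + Pm * Ks) - Ψs = -(Qc + Ksᵀ * R * Ks))
    {Ω : Type*} [MeasurableSpace Ω] (μ : Measure Ω) [IsProbabilityMeasure μ]
    (v0 : Ω → Fin N → ℝ)
    (hconvK : ∀ ω, Tendsto (fun t : ℕ => ((Θ + Pm * K) ^ t).mulVec (v0 ω)) atTop (nhds 0))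
    (hconvs : ∀ ω, Tendsto (fun t : ℕ => ((Θ + Pm * Ks) ^ t).mulVec (v0 ω)) atTop (nhds 0))
    (hSum : ∀ ω, ∀ i j : Fin N, Summable fun t : ℕ =>
      ((Θ + Pm * Ks) ^ t).mulVec (v0 ω) i * ((Θ + Pm * Ks) ^ t).mulVec (v0 ω) j)
    (hIntV : ∀ i j : Fin N, Integrable (fun ω => ∑' t : ℕ,
      ((Θ + Pm * Ks) ^ t).mulVec (v0 ω) i * ((Θ + Pm * Ks) ^ t).mulVec (v0 ω) j) μ)
    (hIntK : Integrable (fun ω => v0 ω ⬝ᵥ ΨK.mulVec (v0 ω)) μ)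
    (hInts : Integrable (fun ω => v0 ω ⬝ᵥ Ψs.mulVec (v0 ω)) μ)
    (Vs : Matrix (Fin N) (Fin N) ℝ)
    (hVs : ∀ i j, Vs i j = ∫ ω, ∑' t : ℕ,
      ((Θ + Pm * Ks) ^ t).mulVec (v0 ω) i * ((Θ + Pm * Ks) ^ t).mulVec (v0 ω) j ∂μ)
    (EK : Matrix (Fin m) (Fin N) ℝ)
    (hEK : EK = (R + Pmᵀ * ΨK * Pm) * K + Pmᵀ * ΨK * Θ) :
    (∫ ω, v0 ω ⬝ᵥ ΨK.mulVec (v0 ω) ∂μ) - (∫ ω, v0 ω ⬝ᵥ Ψs.mulVec (v0 ω) ∂μ)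
      ≤ (Vs * EKᵀ * (R + Pmᵀ * ΨK * Pm)⁻¹ * EK).trace :=
  cost_difference_bound_general Θ Pm Qc R K Ks ΨK Ψs hR hΨK hSteinK hSteins μ v0 hconvs hSum hIntV
    hIntK hInts Vs hVs EK hEK
end

section
/- Under the assumptions of the cost-difference bound, with V̂_K = E[Σ_{t≥L} v̂(t) v̂(t)ᵀ] ≻ 0 the projected state correlation matrix for gain K, the Polyak–Łojasiewicz inequality holds: J(K) − J(K*) ≤ (‖V̂_{K*}‖ / (4 σ_min(R) σ_min(V̂_K)²)) ‖∇J(K)‖_F², where ∇J(K) = 2 E_K V_K and V_K = P V̂_K Pᵀ with PᵀP = I. -/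
open Matrix

/-- The Frobenius norm of a real matrix. -/
noncomputable def frobNorm {a b : ℕ} (A : Matrix (Fin a) (Fin b) ℝ) : ℝ :=
  Real.sqrt (∑ i, ∑ j, A i j ^ 2)

/-!
Write `E = E_K P` and `M = R + Πᵀ Ψ_K Π`. Since `tr (A B)` is monotone in `A` for the
Loewner order when `B ⪰ 0`, the three Loewner bounds `V̂_{K*} ≤ ‖V̂_{K*}‖ I`, `M⁻¹ ≤ σ_R⁻¹ I`
and `σ_V² I ≤ V̂_K²` turn the cost-difference bound into
`J(K) − J(K*) ≤ ‖V̂_{K*}‖ σ_R⁻¹ tr (Eᵀ E) ≤ ‖V̂_{K*}‖ σ_R⁻¹ σ_V⁻² tr (V̂_K² Eᵀ E)`,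
while `Pᵀ P = I` gives `‖∇J(K)‖_F² = 4 tr (V̂_K² Eᵀ E)`. The last two Loewner bounds both come
from `σ A ≤ A²` for `A ⪰ σ I`, as `A² - σ A = (A - σ I)² + σ (A - σ I)`.
-/

open scoped MatrixOrder Matrix.Norms.L2Operator

namespace Matrix

variable {n : Type*} [Fintype n] [DecidableEq n]

lemma trace_mul_le_trace_mul_of_le {A A' B : Matrix n n ℝ} (hA : A ≤ A') (hB : 0 ≤ B) :
    (A * B).trace ≤ (A' * B).trace := by
  obtain ⟨C, rfl⟩ := CStarAlgebra.nonneg_iff_eq_star_mul_self.mp hB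
  have hconj : C * A * star C ≤ C * A' * star C := star_right_conjugate_le_conjugate hA C
  rw [← mul_assoc, trace_mul_cycle, ← mul_assoc, trace_mul_cycle (A := A')]
  simpa [trace_sub] using (le_iff.mp hconj).trace_nonneg

lemma l2_opNorm_one_le {𝕜 : Type*} [RCLike 𝕜] : ‖(1 : Matrix n n 𝕜)‖ ≤ 1 := by
  rw [← l2_opNorm_toEuclideanCLM, map_one]
  exact ContinuousLinearMap.norm_id_le

lemma IsHermitian.le_l2_opNorm_smul_one {A : Matrix n n ℝ} (hA : A.IsHermitian) :
    A ≤ ‖A‖ • 1 := by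
  rw [← Algebra.algebraMap_eq_smul_one]
  refine le_algebraMap_of_spectrum_le (ha := hA.isSelfAdjoint) fun r hr => ?_
  calc r ≤ ‖r‖ := Real.le_norm_self r
    _ ≤ ‖A‖ * ‖(1 : Matrix n n ℝ)‖ := spectrum.norm_le_norm_mul_of_mem hr
    _ ≤ ‖A‖ := mul_le_of_le_one_right (norm_nonneg A) l2_opNorm_one_le

lemma smul_le_mul_self_of_smul_one_le {A : Matrix n n ℝ} {σ : ℝ} (hσ : 0 ≤ σ)
    (hA : A.IsHermitian) (hσA : σ • 1 ≤ A) : σ • A ≤ A * A := by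
  have hdiff : A * A - σ • A = (A - σ • 1)ᴴ * (A - σ • 1) + σ • (A - σ • 1) := by
    rw [conjTranspose_sub, hA.eq, conjTranspose_smul, conjTranspose_one, star_trivial]
    simp only [sub_mul, mul_sub, smul_mul_assoc, mul_smul_comm, one_mul, mul_one, smul_sub,
      smul_smul]
    module
  rw [le_iff, hdiff]
  exact (posSemidef_conjTranspose_mul_self _).add ((le_iff.mp hσA).smul hσ)

lemma sq_smul_one_le_mul_self {A : Matrix n n ℝ} {σ : ℝ} (hσ : 0 ≤ σ)
    (hA : A.IsHermitian) (hσA : σ • 1 ≤ A) : σ ^ 2 • (1 : Matrix n n ℝ) ≤ A * A :=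
  calc σ ^ 2 • (1 : Matrix n n ℝ) = σ • (σ • 1) := by rw [sq, mul_smul]
    _ ≤ σ • A := smul_le_smul_of_nonneg_left hσA hσ
    _ ≤ A * A := smul_le_mul_self_of_smul_one_le hσ hA hσA

lemma inv_le_inv_smul_one {M : Matrix n n ℝ} {σ : ℝ} (hσ : 0 < σ)
    (hM : M.PosDef) (hσM : σ • 1 ≤ M) : M⁻¹ ≤ σ⁻¹ • 1 := by
  -- conjugate `σ M ≤ M²` by `M⁻¹`
  have hconj := star_left_conjugate_le_conjugate
    (smul_le_mul_self_of_smul_one_le hσ.le hM.isHermitian hσM) M⁻¹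
  have hdet : IsUnit M.det := hM.det_pos.ne'.isUnit
  rw [star_eq_conjTranspose, hM.isHermitian.inv.eq, mul_smul_comm, smul_mul_assoc,
    nonsing_inv_mul M hdet, one_mul, ← mul_assoc, nonsing_inv_mul M hdet, one_mul,
    mul_nonsing_inv M hdet] at hconj
  calc M⁻¹ = σ⁻¹ • σ • M⁻¹ := by rw [inv_smul_smul₀ hσ.ne']
    _ ≤ σ⁻¹ • 1 := smul_le_smul_of_nonneg_left hconj (inv_nonneg.mpr hσ.le)

end Matrix

lemma frobNorm_sq {a b : ℕ} (A : Matrix (Fin a) (Fin b) ℝ) :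
    frobNorm A ^ 2 = (A * Aᵀ).trace := by
  rw [frobNorm, Real.sq_sqrt (by positivity)]
  simp [trace, mul_apply, sq]

lemma frobNorm_mul_conj_sq_of_orthonormal {m N d : ℕ} (E : Matrix (Fin m) (Fin N) ℝ)
    {P : Matrix (Fin N) (Fin d) ℝ} (hP : Pᵀ * P = 1) {V : Matrix (Fin d) (Fin d) ℝ}
    (hV : V.IsHermitian) :
    frobNorm (E * (P * V * Pᵀ)) ^ 2 = (V * V * ((E * P)ᵀ * (E * P))).trace := by
  have hGram : E * (P * V * Pᵀ) * (E * (P * V * Pᵀ))ᵀ = E * P * (V * V) * (E * P)ᵀ := by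
    have hVT : Vᵀ = V := by rw [← conjTranspose_eq_transpose_of_trivial]; exact hV.eq
    simp only [transpose_mul, transpose_transpose, hVT, Matrix.mul_assoc]
    rw [← Matrix.mul_assoc Pᵀ P, hP, Matrix.one_mul]
  rw [frobNorm_sq, hGram, trace_mul_cycle, trace_mul_comm]

/-- PL inequality.  Under the cost-difference bound
J(K) − J(K*) ≤ tr(V̂_{K*} Ê_Kᵀ (R + ΠᵀΨ_KΠ)⁻¹ Ê_K) with Ê_K = E_K P,
PᵀP = I, V̂_K ≻ 0 (with V̂_K ⪰ σ_V I, σ_V > 0), R ⪰ σ_R I ≻ 0, Ψ_K ⪰ 0, and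
gradient ∇J(K) = 2 E_K V_K with V_K = P V̂_K Pᵀ, one has
J(K) − J(K*) ≤ (‖V̂_{K*}‖ / (4 σ_R σ_V²)) ‖∇J(K)‖_F². -/
theorem pl_inequality {N m d : ℕ}
    (Pm : Matrix (Fin N) (Fin m) ℝ) (P : Matrix (Fin N) (Fin d) ℝ)
    (R : Matrix (Fin m) (Fin m) ℝ) (ΨK : Matrix (Fin N) (Fin N) ℝ)
    (VhK Vhs : Matrix (Fin d) (Fin d) ℝ)
    (EK : Matrix (Fin m) (Fin N) ℝ)
    (JK Js σR σV : ℝ)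
    (hP : Pᵀ * P = 1)
    (hR : R.PosDef) (hΨK : ΨK.PosSemidef)
    (hVhK : VhK.PosDef) (hVhs : Vhs.PosSemidef)
    (hσR : 0 < σR) (hσRle : (R - σR • (1 : Matrix (Fin m) (Fin m) ℝ)).PosSemidef)
    (hσV : 0 < σV) (hσVle : (VhK - σV • (1 : Matrix (Fin d) (Fin d) ℝ)).PosSemidef)
    (hbound : JK - Js ≤
      (Vhs * (EK * P)ᵀ * (R + Pmᵀ * ΨK * Pm)⁻¹ * (EK * P)).trace) :
    JK - Js ≤ specNorm Vhs / (4 * σR * σV ^ 2)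
        * frobNorm ((2 : ℝ) • (EK * (P * VhK * Pᵀ))) ^ 2 := by
  have hgrad : frobNorm ((2 : ℝ) • (EK * (P * VhK * Pᵀ))) ^ 2
      = 4 * (VhK * VhK * ((EK * P)ᵀ * (EK * P))).trace := by
    rw [frobNorm_sq, transpose_smul, Matrix.smul_mul, Matrix.mul_smul, smul_smul, trace_smul,
      ← frobNorm_sq, frobNorm_mul_conj_sq_of_orthonormal EK hP hVhK.isHermitian, smul_eq_mul]
    norm_num
  set E := EK * P
  set M := R + Pmᵀ * ΨK * Pm
  have hΨ : (Pmᵀ * ΨK * Pm).PosSemidef := by simpa using hΨK.conjTranspose_mul_mul_same Pm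
  have hM : M.PosDef := hR.add_posSemidef hΨ
  have hσM : σR • 1 ≤ M := le_add_of_le_of_nonneg hσRle hΨ.nonneg
  have hE : 0 ≤ Eᵀ * E := by simpa using (posSemidef_conjTranspose_mul_self E).nonneg
  have hspec : (Vhs * (Eᵀ * M⁻¹ * E)).trace ≤ specNorm Vhs * (Eᵀ * M⁻¹ * E).trace := by
    have := trace_mul_le_trace_mul_of_le hVhs.isHermitian.le_l2_opNorm_smul_one
      (by simpa using (hM.posSemidef.inv.conjTranspose_mul_mul_same E).nonneg)
    rwa [smul_one_mul, trace_smul, smul_eq_mul] at this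
  have hinv : (Eᵀ * M⁻¹ * E).trace ≤ σR⁻¹ * (Eᵀ * E).trace := by
    have := trace_mul_le_trace_mul_of_le (inv_le_inv_smul_one hσR hM hσM)
      (by simpa using (posSemidef_self_mul_conjTranspose E).nonneg)
    rw [smul_one_mul, trace_smul, smul_eq_mul, trace_mul_comm E] at this
    rwa [trace_mul_cycle, trace_mul_comm]
  have hsq : σV ^ 2 * (Eᵀ * E).trace ≤ (VhK * VhK * (Eᵀ * E)).trace := by
    simpa using trace_mul_le_trace_mul_of_le
      (sq_smul_one_le_mul_self hσV.le hVhK.isHermitian hσVle) hE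
  calc JK - Js ≤ specNorm Vhs * (Eᵀ * M⁻¹ * E).trace :=
        hbound.trans (by simpa only [Matrix.mul_assoc] using hspec)
    _ ≤ specNorm Vhs * (σR⁻¹ * (Eᵀ * E).trace) := by gcongr; exact norm_nonneg _
    _ ≤ specNorm Vhs * (σR⁻¹ * ((σV ^ 2)⁻¹ * (VhK * VhK * (Eᵀ * E)).trace)) := by
        gcongr
        · exact norm_nonneg _
        · rwa [le_inv_mul_iff₀ (by positivity)]
    _ = _ := by rw [hgrad]; field_simp
end
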